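/- arXiv:2603.16221 — 3 statements merged into one kernel-verified Lean document; each statement's English description precedes it below -/
import Mathlib

section
/- Let m : ℕ × ℕ → ℕ be a symmetric function on a finite index set such that for every index a, Σ_{b ≠ a} m(a,b) is even. Then Σ_c c · Σ_{a<b, a,b≠c} (a+b)·m(a,c)·m(b,c) is even. -/
open Finset

lemma sum_erase_split' {M : Type*} [AddCommMonoid M] (T : Finset ℕ) (a : ℕ)
    (h : ℕ → M) :
    ∑ b ∈ T.erase a, h b
      = ∑ b ∈ T.filter (fun b => b < a), h b + ∑ b ∈ T.filter (fun b => a < b), h b := by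
  rw [← Finset.filter_ne', Finset.sum_filter, Finset.sum_filter, Finset.sum_filter,
    ← Finset.sum_add_distrib]
  refine Finset.sum_congr rfl fun b _ => ?_
  rcases lt_trichotomy b a with hlt | heq | hgt
  · simp [hlt, hlt.ne, not_lt_of_gt hlt]
  · simp [heq]
  · simp [hgt, hgt.ne', not_lt_of_gt hgt]

lemma sum_lt_swap' {M : Type*} [AddCommMonoid M] (T : Finset ℕ) (h : ℕ → ℕ → M) :
    ∑ a ∈ T, ∑ b ∈ T.filter (fun b => b < a), h a b
      = ∑ a ∈ T, ∑ b ∈ T.filter (fun b => a < b), h b a := by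
  simp only [Finset.sum_filter]
  rw [Finset.sum_comm]

/-- If `m` is symmetric on a finite index set `S` with even row sums, then
`Σ_c c · Σ_{a<b, a,b≠c} (a+b)·m(a,c)·m(b,c)` is even. -/
theorem stmt_3 (S : Finset ℕ) (m : ℕ → ℕ → ℕ)
    (hsymm : ∀ a b, m a b = m b a)
    (hrow : ∀ a ∈ S, Even (∑ b ∈ S.erase a, m a b)) :
    Even (∑ c ∈ S, c * ∑ a ∈ (S.erase c), ∑ b ∈ (S.erase c).filter (fun b => a < b),
      (a + b) * m a c * m b c) := by
  have key : ∀ n : ℕ, (n : ZMod 2) = 0 → Even n := by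
    intro n hn
    obtain ⟨k, hk⟩ := (ZMod.natCast_eq_zero_iff n 2).mp hn
    exact ⟨k, by omega⟩
  have mulself : ∀ x : ZMod 2, x * x = x := by decide
  have addself : ∀ x : ZMod 2, x + x = 0 := by decide
  apply key
  push_cast
  -- rewrite each inner sum
  have hc : ∀ c ∈ S, (∑ a ∈ S.erase c, ∑ b ∈ (S.erase c).filter (fun b => a < b),
      ((a : ZMod 2) + (b : ZMod 2)) * (m a c : ZMod 2) * (m b c : ZMod 2))
      = ∑ a ∈ S.erase c, (a : ZMod 2) * (m a c : ZMod 2) := by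
    intro c hcS
    set T := S.erase c with hT
    have hrow0 : ∑ b ∈ T, (m b c : ZMod 2) = 0 := by
      obtain ⟨k, hk⟩ := hrow c hcS
      have : ∑ b ∈ T, (m b c : ZMod 2) = ((∑ b ∈ S.erase c, m c b : ℕ) : ZMod 2) := by
        push_cast
        exact Finset.sum_congr rfl fun b _ => by rw [hsymm]
      rw [this, hk]
      push_cast
      exact addself _
    calc ∑ a ∈ T, ∑ b ∈ T.filter (fun b => a < b),
          ((a : ZMod 2) + (b : ZMod 2)) * (m a c : ZMod 2) * (m b c : ZMod 2)
        = ∑ a ∈ T, (∑ b ∈ T.filter (fun b => a < b),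
            (a : ZMod 2) * (m a c : ZMod 2) * (m b c : ZMod 2)
          + ∑ b ∈ T.filter (fun b => a < b),
            (b : ZMod 2) * (m b c : ZMod 2) * (m a c : ZMod 2)) := by
          refine Finset.sum_congr rfl fun a _ => ?_
          rw [← Finset.sum_add_distrib]
          exact Finset.sum_congr rfl fun b _ => by ring
      _ = ∑ a ∈ T, (∑ b ∈ T.filter (fun b => a < b),
            (a : ZMod 2) * (m a c : ZMod 2) * (m b c : ZMod 2))
          + ∑ a ∈ T, (∑ b ∈ T.filter (fun b => a < b),
            (b : ZMod 2) * (m b c : ZMod 2) * (m a c : ZMod 2)) := by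
          rw [Finset.sum_add_distrib]
      _ = ∑ a ∈ T, (∑ b ∈ T.filter (fun b => a < b),
            (a : ZMod 2) * (m a c : ZMod 2) * (m b c : ZMod 2))
          + ∑ a ∈ T, (∑ b ∈ T.filter (fun b => b < a),
            (a : ZMod 2) * (m a c : ZMod 2) * (m b c : ZMod 2)) := by
          rw [sum_lt_swap' T (fun a b => (a : ZMod 2) * (m a c : ZMod 2) * (m b c : ZMod 2))]
      _ = ∑ a ∈ T, ∑ b ∈ T.erase a,
            (a : ZMod 2) * (m a c : ZMod 2) * (m b c : ZMod 2) := by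
          rw [← Finset.sum_add_distrib]
          refine Finset.sum_congr rfl fun a _ => ?_
          rw [sum_erase_split' T a (fun b => (a : ZMod 2) * (m a c : ZMod 2) * (m b c : ZMod 2))]
          ring
      _ = ∑ a ∈ T, (a : ZMod 2) * (m a c : ZMod 2) := by
          refine Finset.sum_congr rfl fun a haT => ?_
          rw [← Finset.mul_sum, Finset.sum_erase_eq_sub haT, hrow0, zero_sub]
          have : -(m a c : ZMod 2) = (m a c : ZMod 2) := by
            generalize (m a c : ZMod 2) = x; revert x; decide
          rw [this, mul_assoc, mulself]
  rw [Finset.sum_congr rfl fun c hcS => by rw [hc c hcS]]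
  -- now: ∑ c ∈ S, c * ∑ a ∈ S.erase c, a * m a c = 0
  have expand : ∑ c ∈ S, (c : ZMod 2) * ∑ a ∈ S.erase c, (a : ZMod 2) * (m a c : ZMod 2)
      = ∑ c ∈ S, ∑ a ∈ S.erase c, (c : ZMod 2) * (a : ZMod 2) * (m a c : ZMod 2) := by
    refine Finset.sum_congr rfl fun c _ => ?_
    rw [Finset.mul_sum]
    exact Finset.sum_congr rfl fun a _ => by ring
  rw [expand]
  have split := fun c => sum_erase_split' S c
      (fun a => (c : ZMod 2) * (a : ZMod 2) * (m a c : ZMod 2))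
  calc ∑ c ∈ S, ∑ a ∈ S.erase c, (c : ZMod 2) * (a : ZMod 2) * (m a c : ZMod 2)
      = ∑ c ∈ S, (∑ a ∈ S.filter (fun a => a < c),
          (c : ZMod 2) * (a : ZMod 2) * (m a c : ZMod 2)
        + ∑ a ∈ S.filter (fun a => c < a),
          (c : ZMod 2) * (a : ZMod 2) * (m a c : ZMod 2)) := by
        exact Finset.sum_congr rfl fun c _ => split c
    _ = ∑ c ∈ S, ∑ a ∈ S.filter (fun a => a < c),
          (c : ZMod 2) * (a : ZMod 2) * (m a c : ZMod 2)
      + ∑ c ∈ S, ∑ a ∈ S.filter (fun a => c < a),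
          (c : ZMod 2) * (a : ZMod 2) * (m a c : ZMod 2) := Finset.sum_add_distrib
    _ = ∑ c ∈ S, ∑ a ∈ S.filter (fun a => a < c),
          (c : ZMod 2) * (a : ZMod 2) * (m a c : ZMod 2)
      + ∑ c ∈ S, ∑ a ∈ S.filter (fun a => a < c),
          (c : ZMod 2) * (a : ZMod 2) * (m a c : ZMod 2) := by
        congr 1
        rw [← sum_lt_swap' S (fun c a => (a : ZMod 2) * (c : ZMod 2) * (m c a : ZMod 2))]
        refine Finset.sum_congr rfl fun c _ => Finset.sum_congr rfl fun a _ => ?_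
        rw [hsymm a c]; ring
    _ = 0 := addself _
end

section
/- Let S be a finite set of natural numbers and m : ℕ×ℕ → ℕ a symmetric function supported on pairs from S, with Σ_{b ≠ a} m(a,b) even for every a ∈ S. Then Σ_{a<b, c<d, {a,b}∩{c,d}=∅} (a+b)(c+d)·m(a,b)·m(c,d) ≡ Σ_c Σ_{a<b, a,b≠c} a·b·m(a,c)·m(b,c) + Σ_{a<b} a·b·m(a,b) (mod 2). -/
set_option maxHeartbeats 2000000


private lemma ite_sum_push {P : Prop} [Decidable P] (T : Finset ℕ) (f : ℕ → ℤ) :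
    (if P then ∑ x ∈ T, f x else 0) = ∑ x ∈ T, (if P then f x else 0) := by
  split_ifs <;> simp

/-- sum over ordered distinct pairs = sum over a<b of both orientations -/
private lemma pair_sum_eq (T : Finset ℕ) (F : ℕ → ℕ → ℤ) :
    ∑ a ∈ T, ∑ b ∈ T, (if a ≠ b then F a b else 0)
      = ∑ a ∈ T, ∑ b ∈ T, (if a < b then F a b + F b a else 0) := by
  have h1 : ∀ a b : ℕ, (if a ≠ b then F a b else 0)
      = (if a < b then F a b else 0) + (if b < a then F a b else 0) := by
    intro a b; split_ifs <;> (first | ring1 | (exfalso; omega))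
  have h2 : ∀ a b : ℕ, (if a < b then F a b + F b a else 0)
      = (if a < b then F a b else 0) + (if a < b then F b a else 0) := by
    intro a b; split_ifs <;> ring
  simp_rw [h1, h2, Finset.sum_add_distrib]
  congr 1
  exact Finset.sum_comm

private lemma pair_sum_sym (T : Finset ℕ) (F : ℕ → ℕ → ℤ) (hF : ∀ a b, F a b = F b a) :
    ∑ a ∈ T, ∑ b ∈ T, (if a ≠ b then F a b else 0)
      = 2 * ∑ a ∈ T, ∑ b ∈ T, (if a < b then F a b else 0) := by
  rw [pair_sum_eq, Finset.mul_sum]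
  refine Finset.sum_congr rfl fun a _ => ?_
  rw [Finset.mul_sum]
  refine Finset.sum_congr rfl fun b _ => ?_
  rw [hF b a]; split_ifs <;> ring

private lemma sum_swap4 (T : Finset ℕ) (F : ℕ → ℕ → ℕ → ℕ → ℤ) :
    ∑ a ∈ T, ∑ b ∈ T, ∑ c ∈ T, ∑ d ∈ T, F a b c d
      = ∑ c ∈ T, ∑ d ∈ T, ∑ a ∈ T, ∑ b ∈ T, F a b c d := by
  have s1 : ∑ a ∈ T, ∑ b ∈ T, ∑ c ∈ T, ∑ d ∈ T, F a b c d
      = ∑ a ∈ T, ∑ c ∈ T, ∑ b ∈ T, ∑ d ∈ T, F a b c d :=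
    Finset.sum_congr rfl fun a _ => Finset.sum_comm
  have s2 : ∑ a ∈ T, ∑ c ∈ T, ∑ b ∈ T, ∑ d ∈ T, F a b c d
      = ∑ c ∈ T, ∑ a ∈ T, ∑ b ∈ T, ∑ d ∈ T, F a b c d := Finset.sum_comm
  have s3 : ∑ c ∈ T, ∑ a ∈ T, ∑ b ∈ T, ∑ d ∈ T, F a b c d
      = ∑ c ∈ T, ∑ a ∈ T, ∑ d ∈ T, ∑ b ∈ T, F a b c d :=
    Finset.sum_congr rfl fun c _ => Finset.sum_congr rfl fun a _ => Finset.sum_comm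
  have s4 : ∑ c ∈ T, ∑ a ∈ T, ∑ d ∈ T, ∑ b ∈ T, F a b c d
      = ∑ c ∈ T, ∑ d ∈ T, ∑ a ∈ T, ∑ b ∈ T, F a b c d :=
    Finset.sum_congr rfl fun c _ => Finset.sum_comm
  rw [s1, s2, s3, s4]


section Aux6
variable (S : Finset ℕ) (M : ℕ → ℕ → ℤ)

private def SA : ℤ := ∑ a ∈ S, ∑ b ∈ S, if a < b then ((a : ℤ) + b) * M a b else 0

private def SQ : ℤ := ∑ a ∈ S, ∑ b ∈ S, if a < b then (((a : ℤ) + b) * M a b) ^ 2 else 0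

private def SP2 : ℤ := ∑ a ∈ S, ∑ b ∈ S, if a < b then (a : ℤ) * b * M a b else 0

private def SSh : ℤ := ∑ c ∈ S, ∑ a ∈ S, ∑ b ∈ S,
    if a < b then (if a ≠ c ∧ b ≠ c then (((a : ℤ) + c) * M a c) * (((b : ℤ) + c) * M b c) else 0) else 0

private def SSh' : ℤ := ∑ c ∈ S, ∑ a ∈ S, ∑ b ∈ S,
    if a < b then (if a ≠ c ∧ b ≠ c then ((a : ℤ) * b) * (M a c * M b c) else 0) else 0

private def ST1 : ℤ := ∑ c ∈ S, ∑ a ∈ S, ∑ b ∈ S,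
    if a < b then (if a ≠ c ∧ b ≠ c then ((c : ℤ) * ((a : ℤ) + b)) * (M a c * M b c) else 0) else 0

private def ST2 : ℤ := ∑ c ∈ S, ∑ a ∈ S, ∑ b ∈ S,
    if a < b then (if a ≠ c ∧ b ≠ c then ((c : ℤ) ^ 2) * (M a c * M b c) else 0) else 0

private def SL : ℤ := ∑ a ∈ S, ∑ b ∈ S, ∑ c ∈ S, ∑ d ∈ S,
    if a < b then (if a < c ∧ c ≠ b then (if c < d ∧ d ≠ a ∧ d ≠ b then
      (((a : ℤ) + b) * M a b) * (((c : ℤ) + d) * M c d) else 0) else 0) else 0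

end Aux6


section Aux6
variable (S : Finset ℕ) (M : ℕ → ℕ → ℤ)

private lemma expandA :
    SA S M ^ 2 = ∑ a ∈ S, ∑ b ∈ S, ∑ c ∈ S, ∑ d ∈ S,
      (if a < b then ((a : ℤ) + b) * M a b else 0) * (if c < d then ((c : ℤ) + d) * M c d else 0) := by
  rw [sq, SA, Finset.sum_mul_sum]
  refine Finset.sum_congr rfl fun a _ => ?_
  have h1 : ∀ c ∈ S,
      (∑ b ∈ S, if a < b then ((a : ℤ) + b) * M a b else 0) *
        (∑ d ∈ S, if c < d then ((c : ℤ) + d) * M c d else 0)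
      = ∑ b ∈ S, ∑ d ∈ S,
          (if a < b then ((a : ℤ) + b) * M a b else 0) * (if c < d then ((c : ℤ) + d) * M c d else 0) :=
    fun c _ => Finset.sum_mul_sum _ _ _ _
  rw [Finset.sum_congr rfl h1]
  exact Finset.sum_comm

private lemma diag_part :
    (∑ a ∈ S, ∑ b ∈ S, ∑ c ∈ S, ∑ d ∈ S,
      (if c = a then (if d = b then (if a < b then (((a : ℤ) + b) * M a b) ^ 2 else 0) else 0) else 0))
    = SQ S M := by
  rw [SQ]
  refine Finset.sum_congr rfl fun a ha => Finset.sum_congr rfl fun b hb => ?_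
  have h1 : ∀ c ∈ S, (∑ d ∈ S,
        (if c = a then (if d = b then (if a < b then (((a : ℤ) + b) * M a b) ^ 2 else 0) else 0) else 0))
      = (if c = a then (∑ d ∈ S, (if d = b then (if a < b then (((a : ℤ) + b) * M a b) ^ 2 else 0) else 0)) else 0) :=
    fun c _ => (ite_sum_push _ _).symm
  rw [Finset.sum_congr rfl h1, Finset.sum_ite_eq' S a, Finset.sum_ite_eq' S b]
  simp only [ha, hb, if_true]
end Aux6

section Aux6b
variable (S : Finset ℕ) (M : ℕ → ℕ → ℤ)

private lemma collapse3 (T : Finset ℕ) (a : ℕ) (ha : a ∈ T) (G : ℕ → ℕ → ℤ) :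
    (∑ c ∈ T, ∑ d ∈ T, if c = a then G c d else 0) = ∑ d ∈ T, G a d := by
  have h1 : ∀ c ∈ T, (∑ d ∈ T, if c = a then G c d else 0) = (if c = a then ∑ d ∈ T, G c d else 0) :=
    fun c _ => (ite_sum_push _ _).symm
  rw [Finset.sum_congr rfl h1, Finset.sum_ite_eq' T a]
  simp [ha]

private lemma collapse_last (T : Finset ℕ) (b : ℕ) (hb : b ∈ T) (G : ℕ → ℤ) :
    (∑ d ∈ T, if d = b then G d else 0) = G b := by
  rw [Finset.sum_ite_eq' T b]; simp [hb]

private lemma shared_part (hs : ∀ a b, M a b = M b a) :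
    (∑ a ∈ S, ∑ b ∈ S, ∑ c ∈ S, ∑ d ∈ S,
      if a < b ∧ c < d ∧ (c = a ∨ c = b ∨ d = a ∨ d = b) ∧ ¬(c = a ∧ d = b)
        then (((a : ℤ) + b) * M a b) * (((c : ℤ) + d) * M c d) else 0)
    = 2 * SSh S M := by
  have hpt : ∀ a b c d : ℕ,
      (if a < b ∧ c < d ∧ (c = a ∨ c = b ∨ d = a ∨ d = b) ∧ ¬(c = a ∧ d = b)
        then (((a : ℤ) + b) * M a b) * (((c : ℤ) + d) * M c d) else 0)
      = (if c = a then (if a < b ∧ c < d ∧ d ≠ b then (((a : ℤ) + b) * M a b) * (((c : ℤ) + d) * M c d) else 0) else 0)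
      + (if c = b then (if a < b ∧ c < d ∧ d ≠ a then (((a : ℤ) + b) * M a b) * (((c : ℤ) + d) * M c d) else 0) else 0)
      + (if d = a then (if a < b ∧ c < d ∧ c ≠ b then (((a : ℤ) + b) * M a b) * (((c : ℤ) + d) * M c d) else 0) else 0)
      + (if d = b then (if a < b ∧ c < d ∧ c ≠ a then (((a : ℤ) + b) * M a b) * (((c : ℤ) + d) * M c d) else 0) else 0) := by
    intro a b c d
    split_ifs <;> (first | ring1 | (exfalso; omega))
  simp_rw [hpt, Finset.sum_add_distrib]
  have e1 : (∑ a ∈ S, ∑ b ∈ S, ∑ c ∈ S, ∑ d ∈ S,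
        (if c = a then (if a < b ∧ c < d ∧ d ≠ b then (((a : ℤ) + b) * M a b) * (((c : ℤ) + d) * M c d) else 0) else 0))
      = ∑ a ∈ S, ∑ b ∈ S, ∑ d ∈ S,
        (if a < b ∧ a < d ∧ d ≠ b then (((a : ℤ) + b) * M a b) * (((a : ℤ) + d) * M a d) else 0) :=
    Finset.sum_congr rfl fun a ha => Finset.sum_congr rfl fun b _ => collapse3 S a ha _
  have e2 : (∑ a ∈ S, ∑ b ∈ S, ∑ c ∈ S, ∑ d ∈ S,
        (if c = b then (if a < b ∧ c < d ∧ d ≠ a then (((a : ℤ) + b) * M a b) * (((c : ℤ) + d) * M c d) else 0) else 0))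
      = ∑ a ∈ S, ∑ b ∈ S, ∑ d ∈ S,
        (if a < b ∧ b < d ∧ d ≠ a then (((a : ℤ) + b) * M a b) * (((b : ℤ) + d) * M b d) else 0) :=
    Finset.sum_congr rfl fun a _ => Finset.sum_congr rfl fun b hb => collapse3 S b hb _
  have e3 : (∑ a ∈ S, ∑ b ∈ S, ∑ c ∈ S, ∑ d ∈ S,
        (if d = a then (if a < b ∧ c < d ∧ c ≠ b then (((a : ℤ) + b) * M a b) * (((c : ℤ) + d) * M c d) else 0) else 0))
      = ∑ a ∈ S, ∑ b ∈ S, ∑ c ∈ S,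
        (if a < b ∧ c < a ∧ c ≠ b then (((a : ℤ) + b) * M a b) * (((c : ℤ) + a) * M c a) else 0) :=
    Finset.sum_congr rfl fun a ha => Finset.sum_congr rfl fun b _ =>
      Finset.sum_congr rfl fun c _ => collapse_last S a ha _
  have e4 : (∑ a ∈ S, ∑ b ∈ S, ∑ c ∈ S, ∑ d ∈ S,
        (if d = b then (if a < b ∧ c < d ∧ c ≠ a then (((a : ℤ) + b) * M a b) * (((c : ℤ) + d) * M c d) else 0) else 0))
      = ∑ a ∈ S, ∑ b ∈ S, ∑ c ∈ S,
        (if a < b ∧ c < b ∧ c ≠ a then (((a : ℤ) + b) * M a b) * (((c : ℤ) + b) * M c b) else 0) :=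
    Finset.sum_congr rfl fun a _ => Finset.sum_congr rfl fun b hb =>
      Finset.sum_congr rfl fun c _ => collapse_last S b hb _
  rw [e1, e2, e3, e4]
  -- reorder e2, e4 so that the "center" variable is outermost
  have r2 : (∑ a ∈ S, ∑ b ∈ S, ∑ d ∈ S,
        (if a < b ∧ b < d ∧ d ≠ a then (((a : ℤ) + b) * M a b) * (((b : ℤ) + d) * M b d) else 0))
      = ∑ b ∈ S, ∑ a ∈ S, ∑ d ∈ S,
        (if a < b ∧ b < d ∧ d ≠ a then (((a : ℤ) + b) * M a b) * (((b : ℤ) + d) * M b d) else 0) :=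
    Finset.sum_comm
  have r4 : (∑ a ∈ S, ∑ b ∈ S, ∑ c ∈ S,
        (if a < b ∧ c < b ∧ c ≠ a then (((a : ℤ) + b) * M a b) * (((c : ℤ) + b) * M c b) else 0))
      = ∑ b ∈ S, ∑ a ∈ S, ∑ c ∈ S,
        (if a < b ∧ c < b ∧ c ≠ a then (((a : ℤ) + b) * M a b) * (((c : ℤ) + b) * M c b) else 0) :=
    Finset.sum_comm
  rw [r2, r4]
  rw [← Finset.sum_add_distrib, ← Finset.sum_add_distrib, ← Finset.sum_add_distrib]
  simp_rw [← Finset.sum_add_distrib]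
  -- now a single triple sum over (v, x, y); combine pointwise
  have comb : ∀ v x y : ℕ,
      ((if v < x ∧ v < y ∧ y ≠ x then (((v : ℤ) + x) * M v x) * (((v : ℤ) + y) * M v y) else 0)
      + (if x < v ∧ v < y ∧ y ≠ x then (((x : ℤ) + v) * M x v) * (((v : ℤ) + y) * M v y) else 0)
      + (if v < x ∧ y < v ∧ y ≠ x then (((v : ℤ) + x) * M v x) * (((y : ℤ) + v) * M y v) else 0)
      + (if x < v ∧ y < v ∧ y ≠ x then (((x : ℤ) + v) * M x v) * (((y : ℤ) + v) * M y v) else 0))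
      = (if x ≠ y then (if x ≠ v ∧ y ≠ v then (((v : ℤ) + x) * M v x) * (((v : ℤ) + y) * M v y) else 0) else 0) := by
    intro v x y
    rw [hs x v, hs y v]
    split_ifs <;> (first | ring1 | (exfalso; omega))
  rw [Finset.sum_congr rfl (fun v (_ : v ∈ S) => Finset.sum_congr rfl fun x _ =>
    Finset.sum_congr rfl fun y _ => comb v x y)]
  have step2 : ∀ v ∈ S,
      (∑ x ∈ S, ∑ y ∈ S, (if x ≠ y then (if x ≠ v ∧ y ≠ v then
          (((v : ℤ) + x) * M v x) * (((v : ℤ) + y) * M v y) else 0) else 0))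
      = 2 * ∑ x ∈ S, ∑ y ∈ S, (if x < y then (if x ≠ v ∧ y ≠ v then
          (((v : ℤ) + x) * M v x) * (((v : ℤ) + y) * M v y) else 0) else 0) :=
    fun v _ => pair_sum_sym S _ (fun x y => by
      split_ifs <;> (first | ring1 | (exfalso; omega)))
  rw [Finset.sum_congr rfl step2, ← Finset.mul_sum, SSh]
  congr 1
  refine Finset.sum_congr rfl fun v _ => Finset.sum_congr rfl fun x _ =>
    Finset.sum_congr rfl fun y _ => ?_
  rw [hs v x, hs v y]
  split_ifs <;> ring1
end Aux6b

section Aux6c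
variable (S : Finset ℕ) (M : ℕ → ℕ → ℤ)

private lemma disj_part :
    (∑ a ∈ S, ∑ b ∈ S, ∑ c ∈ S, ∑ d ∈ S,
      if a < b ∧ c < d ∧ c ≠ a ∧ c ≠ b ∧ d ≠ a ∧ d ≠ b
        then (((a : ℤ) + b) * M a b) * (((c : ℤ) + d) * M c d) else 0)
    = 2 * SL S M := by
  have hpt : ∀ a b c d : ℕ,
      (if a < b ∧ c < d ∧ c ≠ a ∧ c ≠ b ∧ d ≠ a ∧ d ≠ b
        then (((a : ℤ) + b) * M a b) * (((c : ℤ) + d) * M c d) else 0)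
      = (if a < b ∧ c < d ∧ c ≠ a ∧ c ≠ b ∧ d ≠ a ∧ d ≠ b ∧ a < c
          then (((a : ℤ) + b) * M a b) * (((c : ℤ) + d) * M c d) else 0)
      + (if a < b ∧ c < d ∧ c ≠ a ∧ c ≠ b ∧ d ≠ a ∧ d ≠ b ∧ c < a
          then (((a : ℤ) + b) * M a b) * (((c : ℤ) + d) * M c d) else 0) := by
    intro a b c d
    split_ifs <;> (first | ring1 | (exfalso; omega))
  simp_rw [hpt, Finset.sum_add_distrib]
  have e1 : (∑ a ∈ S, ∑ b ∈ S, ∑ c ∈ S, ∑ d ∈ S,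
        (if a < b ∧ c < d ∧ c ≠ a ∧ c ≠ b ∧ d ≠ a ∧ d ≠ b ∧ a < c
          then (((a : ℤ) + b) * M a b) * (((c : ℤ) + d) * M c d) else 0))
      = SL S M := by
    rw [SL]
    refine Finset.sum_congr rfl fun a _ => Finset.sum_congr rfl fun b _ =>
      Finset.sum_congr rfl fun c _ => Finset.sum_congr rfl fun d _ => ?_
    split_ifs <;> (first | ring1 | (exfalso; omega))
  have e2 : (∑ a ∈ S, ∑ b ∈ S, ∑ c ∈ S, ∑ d ∈ S,
        (if a < b ∧ c < d ∧ c ≠ a ∧ c ≠ b ∧ d ≠ a ∧ d ≠ b ∧ c < a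
          then (((a : ℤ) + b) * M a b) * (((c : ℤ) + d) * M c d) else 0))
      = SL S M := by
    rw [sum_swap4 S (fun a b c d =>
      (if a < b ∧ c < d ∧ c ≠ a ∧ c ≠ b ∧ d ≠ a ∧ d ≠ b ∧ c < a
          then (((a : ℤ) + b) * M a b) * (((c : ℤ) + d) * M c d) else 0)), SL]
    refine Finset.sum_congr rfl fun a _ => Finset.sum_congr rfl fun b _ =>
      Finset.sum_congr rfl fun c _ => Finset.sum_congr rfl fun d _ => ?_
    split_ifs <;> (first | ring1 | (exfalso; omega))
  rw [e1, e2]; ring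
end Aux6c

section Aux6d
variable (S : Finset ℕ) (M : ℕ → ℕ → ℤ)

private lemma idI (hs : ∀ a b, M a b = M b a) :
    SA S M ^ 2 = SQ S M + 2 * SSh S M + 2 * SL S M := by
  rw [expandA]
  have hpt : ∀ a b c d : ℕ,
      (if a < b then ((a : ℤ) + b) * M a b else 0) * (if c < d then ((c : ℤ) + d) * M c d else 0)
      = (if c = a then (if d = b then (if a < b then (((a : ℤ) + b) * M a b) ^ 2 else 0) else 0) else 0)
      + (if a < b ∧ c < d ∧ (c = a ∨ c = b ∨ d = a ∨ d = b) ∧ ¬(c = a ∧ d = b)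
          then (((a : ℤ) + b) * M a b) * (((c : ℤ) + d) * M c d) else 0)
      + (if a < b ∧ c < d ∧ c ≠ a ∧ c ≠ b ∧ d ≠ a ∧ d ≠ b
          then (((a : ℤ) + b) * M a b) * (((c : ℤ) + d) * M c d) else 0) := by
    intro a b c d
    split_ifs <;> (first | ring1 | (subst_vars; ring1) | (exfalso; omega))
  simp_rw [hpt, Finset.sum_add_distrib]
  rw [diag_part, shared_part S M hs, disj_part]

private lemma idA (hs : ∀ a b, M a b = M b a) :
    SA S M = ∑ a ∈ S, (a : ℤ) * (∑ b ∈ S, if b ≠ a then M a b else 0) := by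
  have e1 : SA S M = ∑ a ∈ S, ∑ b ∈ S, (if a ≠ b then (a : ℤ) * M a b else 0) := by
    rw [SA, pair_sum_eq S (fun a b => (a : ℤ) * M a b)]
    refine Finset.sum_congr rfl fun a _ => Finset.sum_congr rfl fun b _ => ?_
    rw [hs b a]
    split_ifs <;> ring1
  rw [e1]
  refine Finset.sum_congr rfl fun a _ => ?_
  rw [Finset.mul_sum]
  refine Finset.sum_congr rfl fun b _ => ?_
  split_ifs <;> (first | ring1 | (exfalso; omega))

private lemma Advd (hs : ∀ a b, M a b = M b a)
    (hr : ∀ c ∈ S, (2:ℤ) ∣ ∑ b ∈ S, (if b ≠ c then M b c else 0)) :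
    (4:ℤ) ∣ SA S M ^ 2 := by
  have h2 : (2:ℤ) ∣ SA S M := by
    rw [idA S M hs]
    refine Finset.dvd_sum fun a ha => ?_
    have e : (∑ b ∈ S, if b ≠ a then M a b else 0) = ∑ b ∈ S, (if b ≠ a then M b a else 0) :=
      Finset.sum_congr rfl fun b _ => by rw [hs a b]
    exact Dvd.dvd.mul_left (e ▸ hr a ha) _
  obtain ⟨k, hk⟩ := h2
  exact ⟨k ^ 2, by rw [hk]; ring⟩

private lemma idSh : SSh S M = SSh' S M + ST1 S M + ST2 S M := by
  rw [SSh, SSh', ST1, ST2]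
  simp_rw [← Finset.sum_add_distrib]
  refine Finset.sum_congr rfl fun c _ => Finset.sum_congr rfl fun a _ =>
    Finset.sum_congr rfl fun b _ => ?_
  split_ifs <;> ring1
end Aux6d

section Aux6e
variable (S : Finset ℕ) (M : ℕ → ℕ → ℤ)

private lemma inner_split (T : Finset ℕ) (a c : ℕ) (ha : a ∈ T) (g : ℕ → ℤ) (hac : a ≠ c) :
    (∑ b ∈ T, if b ≠ a ∧ b ≠ c then g b else 0)
      = (∑ b ∈ T, if b ≠ c then g b else 0) - g a := by
  have hpt : ∀ b : ℕ, (if b ≠ c then g b else 0)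
      = (if b ≠ a ∧ b ≠ c then g b else 0) + (if b = a then (if b ≠ c then g b else 0) else 0) := by
    intro b; split_ifs <;> (first | ring1 | (exfalso; omega))
  rw [Finset.sum_congr rfl fun b _ => hpt b, Finset.sum_add_distrib,
    collapse_last T a ha (fun b => if b ≠ c then g b else 0)]
  simp only [ne_eq, hac, not_false_eq_true, if_true]
  ring

private lemma idT1 :
    ST1 S M = ∑ c ∈ S, ∑ a ∈ S,
      (if a ≠ c then ((c : ℤ) * a * M a c) * ((∑ b ∈ S, if b ≠ c then M b c else 0) - M a c) else 0) := by
  rw [ST1]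
  refine Finset.sum_congr rfl fun c _ => ?_
  have e1 : (∑ a ∈ S, ∑ b ∈ S, if a < b then
        (if a ≠ c ∧ b ≠ c then ((c : ℤ) * ((a : ℤ) + b)) * (M a c * M b c) else 0) else 0)
      = ∑ a ∈ S, ∑ b ∈ S, (if a ≠ b then
          (if a ≠ c ∧ b ≠ c then ((c : ℤ) * a) * (M a c * M b c) else 0) else 0) := by
    rw [pair_sum_eq S (fun a b => if a ≠ c ∧ b ≠ c then ((c : ℤ) * a) * (M a c * M b c) else 0)]
    refine Finset.sum_congr rfl fun a _ => Finset.sum_congr rfl fun b _ => ?_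
    split_ifs <;> (first | ring1 | (exfalso; omega))
  rw [e1]
  refine Finset.sum_congr rfl fun a ha => ?_
  have e2 : ∀ b : ℕ, (if a ≠ b then
        (if a ≠ c ∧ b ≠ c then ((c : ℤ) * a) * (M a c * M b c) else 0) else 0)
      = (if a ≠ c then ((c : ℤ) * a * M a c) * (if b ≠ a ∧ b ≠ c then M b c else 0) else 0) := by
    intro b; split_ifs <;> (first | ring1 | (exfalso; omega))
  rw [Finset.sum_congr rfl fun b _ => e2 b, ← ite_sum_push]
  by_cases hac : a ≠ c
  · simp only [ne_eq, hac, not_false_eq_true, if_true]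
    rw [← Finset.mul_sum, inner_split S a c ha (fun b => M b c) hac]
  · simp [hac]

private lemma T1div (hs : ∀ a b, M a b = M b a)
    (hr : ∀ c ∈ S, (2:ℤ) ∣ ∑ b ∈ S, (if b ≠ c then M b c else 0)) :
    (4:ℤ) ∣ 2 * ST1 S M := by
  rw [idT1, Finset.mul_sum]
  simp_rw [Finset.mul_sum]
  have hpt : ∀ c a : ℕ,
      2 * (if a ≠ c then ((c : ℤ) * a * M a c) * ((∑ b ∈ S, if b ≠ c then M b c else 0) - M a c) else 0)
      = (if a ≠ c then 2 * ((c : ℤ) * a * M a c) * (∑ b ∈ S, if b ≠ c then M b c else 0) else 0)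
        - (if a ≠ c then 2 * ((c : ℤ) * a * M a c * M a c) else 0) := by
    intro c a; split_ifs <;> ring1
  simp_rw [hpt, Finset.sum_sub_distrib]
  refine dvd_sub (Finset.dvd_sum fun c hc => Finset.dvd_sum fun a _ => ?_) ?_
  · obtain ⟨k, hk⟩ := hr c hc
    split_ifs
    · exact ⟨(c : ℤ) * a * M a c * k, by rw [hk]; ring⟩
    · exact ⟨0, by ring⟩
  · -- 4 ∣ ∑ c ∑ a χ(a≠c) 2*c*a*M a c^2
    have e : (∑ c ∈ S, ∑ a ∈ S, if a ≠ c then 2 * ((c : ℤ) * a * M a c * M a c) else 0)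
        = 2 * ∑ c ∈ S, ∑ a ∈ S, (if c ≠ a then ((c : ℤ) * a * M a c * M a c) else 0) := by
      rw [Finset.mul_sum]
      refine Finset.sum_congr rfl fun c _ => ?_
      rw [Finset.mul_sum]
      refine Finset.sum_congr rfl fun a _ => ?_
      split_ifs <;> (first | ring1 | (exfalso; omega))
    rw [e, pair_sum_sym S (fun c a => (c : ℤ) * a * M a c * M a c)
      (fun c a => by
        show (c : ℤ) * a * M a c * M a c = (a : ℤ) * c * M c a * M c a
        rw [hs a c]; ring)]
    exact ⟨∑ a ∈ S, ∑ b ∈ S, if a < b then (a : ℤ) * b * M b a * M b a else 0, by ring⟩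
end Aux6e

section Aux6f
variable (S : Finset ℕ) (M : ℕ → ℕ → ℤ)

private lemma QT2div (hs : ∀ a b, M a b = M b a)
    (hr : ∀ c ∈ S, (2:ℤ) ∣ ∑ b ∈ S, (if b ≠ c then M b c else 0)) :
    (4:ℤ) ∣ SQ S M + 2 * ST2 S M + 2 * SP2 S M := by
  have hQ : SQ S M = (∑ a ∈ S, ∑ b ∈ S, if a ≠ b then (a:ℤ)^2 * (M a b * M a b) else 0)
      + (∑ a ∈ S, ∑ b ∈ S, if a < b then 2 * ((a:ℤ) * b * (M a b * M a b)) else 0) := by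
    rw [SQ, pair_sum_eq S (fun a b => (a:ℤ)^2 * (M a b * M a b))]
    simp_rw [← Finset.sum_add_distrib]
    refine Finset.sum_congr rfl fun a _ => Finset.sum_congr rfl fun b _ => ?_
    rw [hs b a]; split_ifs <;> ring1
  have hT2 : 2 * ST2 S M = (∑ c ∈ S, ((c:ℤ) * ∑ b ∈ S, (if b ≠ c then M b c else 0))^2)
      - ∑ c ∈ S, ∑ a ∈ S, (if a ≠ c then (c:ℤ)^2 * (M a c * M a c) else 0) := by
    rw [ST2, Finset.mul_sum, ← Finset.sum_sub_distrib]
    refine Finset.sum_congr rfl fun c _ => ?_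
    have hRsq : (∑ b ∈ S, (if b ≠ c then M b c else 0)) * (∑ b ∈ S, (if b ≠ c then M b c else 0))
        = (∑ a ∈ S, (if a ≠ c then M a c * M a c else 0))
          + ∑ a ∈ S, ∑ b ∈ S, (if a ≠ b then (if a ≠ c ∧ b ≠ c then M a c * M b c else 0) else 0) := by
      rw [Finset.sum_mul_sum]
      have hpt : ∀ a b : ℕ, (if a ≠ c then M a c else 0) * (if b ≠ c then M b c else 0)
          = (if b = a then (if a ≠ c then M a c * M a c else 0) else 0)
            + (if a ≠ b then (if a ≠ c ∧ b ≠ c then M a c * M b c else 0) else 0) := by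
        intro a b; split_ifs <;> (first | ring1 | (subst_vars; ring1) | (exfalso; omega))
      simp_rw [hpt, Finset.sum_add_distrib]
      congr 1
      exact Finset.sum_congr rfl fun a ha => collapse_last S a ha _
    have hpair : (∑ a ∈ S, ∑ b ∈ S, (if a ≠ b then (if a ≠ c ∧ b ≠ c then M a c * M b c else 0) else 0))
        = 2 * ∑ a ∈ S, ∑ b ∈ S, (if a < b then (if a ≠ c ∧ b ≠ c then M a c * M b c else 0) else 0) :=
      pair_sum_sym S _ (fun a b => by split_ifs <;> (first | ring1 | (exfalso; omega)))
    have hfac : (∑ a ∈ S, ∑ b ∈ S, if a < b then (if a ≠ c ∧ b ≠ c then (c:ℤ)^2 * (M a c * M b c) else 0) else 0)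
        = (c:ℤ)^2 * ∑ a ∈ S, ∑ b ∈ S, (if a < b then (if a ≠ c ∧ b ≠ c then M a c * M b c else 0) else 0) := by
      rw [Finset.mul_sum]
      refine Finset.sum_congr rfl fun a _ => ?_
      rw [Finset.mul_sum]
      refine Finset.sum_congr rfl fun b _ => ?_
      split_ifs <;> ring1
    have hY : (∑ a ∈ S, (if a ≠ c then (c:ℤ)^2 * (M a c * M a c) else 0))
        = (c:ℤ)^2 * ∑ a ∈ S, (if a ≠ c then M a c * M a c else 0) := by
      rw [Finset.mul_sum]
      refine Finset.sum_congr rfl fun a _ => ?_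
      split_ifs <;> ring1
    rw [hfac, hY]
    have hcomb := hRsq.trans (by rw [hpair])
    linear_combination (-(c:ℤ)^2) * hcomb
  have hGG : (∑ a ∈ S, ∑ b ∈ S, if a ≠ b then (a:ℤ)^2 * (M a b * M a b) else 0)
      = ∑ c ∈ S, ∑ a ∈ S, (if a ≠ c then (c:ℤ)^2 * (M a c * M a c) else 0) := by
    refine Finset.sum_congr rfl fun x _ => Finset.sum_congr rfl fun y _ => ?_
    rw [hs y x]
    split_ifs <;> (first | ring1 | (exfalso; omega))
  have h2P2 : 2 * SP2 S M = ∑ a ∈ S, ∑ b ∈ S, (if a < b then 2 * ((a:ℤ) * b * M a b) else 0) := by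
    rw [SP2, Finset.mul_sum]
    refine Finset.sum_congr rfl fun a _ => ?_
    rw [Finset.mul_sum]
    refine Finset.sum_congr rfl fun b _ => ?_
    split_ifs <;> ring1
  have hcombine : (∑ a ∈ S, ∑ b ∈ S, if a < b then 2 * ((a:ℤ) * b * (M a b * M a b)) else 0)
      + (∑ a ∈ S, ∑ b ∈ S, if a < b then 2 * ((a:ℤ) * b * M a b) else 0)
      = ∑ a ∈ S, ∑ b ∈ S, (if a < b then 2 * ((a:ℤ) * b * (M a b * (M a b + 1))) else 0) := by
    rw [← Finset.sum_add_distrib]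
    refine Finset.sum_congr rfl fun a _ => ?_
    rw [← Finset.sum_add_distrib]
    refine Finset.sum_congr rfl fun b _ => ?_
    split_ifs <;> ring1
  have htot : SQ S M + 2 * ST2 S M + 2 * SP2 S M
      = (∑ c ∈ S, ((c:ℤ) * ∑ b ∈ S, (if b ≠ c then M b c else 0))^2)
        + ∑ a ∈ S, ∑ b ∈ S, (if a < b then 2 * ((a:ℤ) * b * (M a b * (M a b + 1))) else 0) := by
    rw [hQ, hT2, h2P2, hGG]
    linear_combination hcombine
  rw [htot]
  refine dvd_add (Finset.dvd_sum fun c hc => ?_) (Finset.dvd_sum fun a _ => Finset.dvd_sum fun b _ => ?_)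
  · obtain ⟨k, hk⟩ := hr c hc
    exact ⟨(c:ℤ)^2 * k^2, by rw [hk]; ring⟩
  · split_ifs
    · obtain ⟨k, hk⟩ := Int.even_mul_succ_self (M a b)
      exact ⟨(a:ℤ) * b * k, by rw [hk]; ring⟩
    · exact ⟨0, by ring⟩
end Aux6f

section Aux6g
variable (S : Finset ℕ) (M : ℕ → ℕ → ℤ)

private lemma key (hs : ∀ a b, M a b = M b a)
    (hr : ∀ c ∈ S, (2:ℤ) ∣ ∑ b ∈ S, (if b ≠ c then M b c else 0)) :
    (2:ℤ) ∣ SSh' S M + SP2 S M - SL S M := by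
  have h4 : (4:ℤ) ∣ 2 * (SSh' S M + SP2 S M - SL S M) := by
    have hI := idI S M hs
    have hSh := idSh S M
    have e : 2 * (SSh' S M + SP2 S M - SL S M)
        = (SQ S M + 2 * ST2 S M + 2 * SP2 S M) + (2 * ST1 S M) + 4 * SSh' S M - SA S M ^ 2 := by
      linear_combination hI + 2 * hSh
    rw [e]
    exact dvd_sub (dvd_add (dvd_add (QT2div S M hs hr) (T1div S M hs hr)) ⟨SSh' S M, by ring⟩)
      (Advd S M hs hr)
  obtain ⟨k, hk⟩ := h4
  exact ⟨k, by linarith⟩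
end Aux6g


/-- For `m` symmetric on a finite set `S` with even row sums:
`Σ_{{a<b},{c<d} disjoint} (a+b)(c+d) m(a,b) m(c,d)
  ≡ Σ_c Σ_{a<b, a,b≠c} ab·m(a,c)m(b,c) + Σ_{a<b} ab·m(a,b) (mod 2)`.
The first sum is over unordered pairs of disjoint unordered pairs, normalized by `a < c`. -/

theorem stmt_6 (S : Finset ℕ) (m : ℕ → ℕ → ℕ)
    (hsymm : ∀ a b, m a b = m b a)
    (hrow : ∀ a ∈ S, Even (∑ b ∈ S.erase a, m a b)) :
    (∑ a ∈ S, ∑ b ∈ S.filter (fun b => a < b),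
      ∑ c ∈ S.filter (fun c => a < c ∧ c ≠ b),
        ∑ d ∈ S.filter (fun d => c < d ∧ d ≠ a ∧ d ≠ b),
          (a + b) * (c + d) * m a b * m c d) ≡
    (∑ c ∈ S, ∑ a ∈ S.erase c, ∑ b ∈ (S.erase c).filter (fun b => a < b),
        a * b * m a c * m b c)
    + (∑ a ∈ S, ∑ b ∈ S.filter (fun b => a < b), a * b * m a b) [MOD 2] := by
  rw [Nat.modEq_iff_dvd]
  push_cast
  simp only [← Finset.filter_ne', Finset.sum_filter]
  simp only [ite_sum_push]
  have hM : ∀ a b, ((m a b : ℤ)) = ((m b a : ℤ)) := fun a b => by rw [hsymm a b]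
  have hrz : ∀ c ∈ S, (2:ℤ) ∣ ∑ b ∈ S, (if b ≠ c then ((m b c : ℤ)) else 0) := by
    intro c hc
    have e : (∑ b ∈ S, (if b ≠ c then ((m b c : ℤ)) else 0))
        = ((∑ b ∈ S.erase c, m c b : ℕ) : ℤ) := by
      rw [← Finset.sum_filter, Finset.filter_ne']
      push_cast
      exact Finset.sum_congr rfl fun b _ => hM b c
    obtain ⟨k, hk⟩ := hrow c hc
    exact ⟨(k : ℤ), by rw [e, hk]; push_cast; ring⟩
  have main := key S (fun a b => ((m a b : ℤ))) hM hrz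
  have e1 : (∑ c ∈ S, ∑ a ∈ S, ∑ b ∈ S,
        if a ≠ c then (if b ≠ c then (if a < b then (a:ℤ) * b * (m a c) * (m b c) else 0) else 0) else 0)
      = SSh' S (fun a b => ((m a b : ℤ))) := by
    rw [SSh']
    refine Finset.sum_congr rfl fun c _ => Finset.sum_congr rfl fun a _ =>
      Finset.sum_congr rfl fun b _ => ?_
    split_ifs <;> (first | ring1 | (exfalso; omega))
  have e2 : (∑ a ∈ S, ∑ b ∈ S, if a < b then (a:ℤ) * b * (m a b) else 0)
      = SP2 S (fun a b => ((m a b : ℤ))) := rfl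
  have e3 : (∑ a ∈ S, ∑ b ∈ S, ∑ c ∈ S, ∑ d ∈ S,
        if a < b then (if a < c ∧ c ≠ b then (if c < d ∧ d ≠ a ∧ d ≠ b then
          ((a:ℤ) + b) * ((c:ℤ) + d) * (m a b) * (m c d) else 0) else 0) else 0)
      = SL S (fun a b => ((m a b : ℤ))) := by
    rw [SL]
    refine Finset.sum_congr rfl fun a _ => Finset.sum_congr rfl fun b _ =>
      Finset.sum_congr rfl fun c _ => Finset.sum_congr rfl fun d _ => ?_
    split_ifs <;> ring1
  rw [e1, e2, e3]
  exact main
end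

section
/- In a cycle of m chords C(e'_1), …, C(e'_m) in the disk forming a closed loop (consecutive chords share an endpoint index a_k, with a_1 the leftmost endpoint), the total number of internal crossings is congruent mod 2 to 1 + #{k : the cycle turns 'right' at a_k with a_{k+1} < a_k} + #{k : the cycle turns 'left' at a_k with a_{k+1} > a_k}. Abstractly: for a cyclic sequence a_1, …, a_m of distinct reals with a_1 minimal among chord endpoints and chords joining consecutive points, the crossing parity of the closed polygonal chord cycle equals 1 plus the count of descending right-turns plus ascending left-turns. -/
/-!
Mod 2, two chords with distinct endpoints cross exactly when the four comparisons `[x < y]`,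
`x` an end of one chord and `y` an end of the other, add up to `1`; so the crossing number is a
sum of comparison indicators over pairs of endpoints. The two ends `t (k - 1)` and `s k` at `a k`
are neighbours, hence compare alike with every other endpoint. This turns the `s`–`s`
comparisons into the `t`–`t` comparisons of the cycle rotated by one step, which reverses
`m - 1` pairs, and collapses the mixed comparisons to the local ones `[t (k - 1) < s k]`. What
remains is `1 + ∑ k, ([t (k - 1) < s k] + [s k < t k])`, and the `k`-th summand is odd exactly
when the cycle makes a descending right turn or an ascending left turn at `a k`.
-/

/-- Two chords in the upper half-plane, with endpoints `p,q` and `p',q'` on the real line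
(all distinct), cross if and only if exactly one endpoint of the second chord lies strictly
between the endpoints of the first. -/
def chordCross (p q p' q' : ℝ) : Prop :=
  Xor' (p' ∈ Set.Ioo (min p q) (max p q)) (q' ∈ Set.Ioo (min p q) (max p q))

open Finset

section LinearOrder

variable {α : Type*} [LinearOrder α]

def ltInd (x y : α) : ZMod 2 := if x < y then 1 else 0

lemma ltInd_self (x : α) : ltInd x x = 0 := if_neg (lt_irrefl x)

lemma ltInd_add_ltInd_swap {x y : α} (h : x ≠ y) : ltInd x y + ltInd y x = 1 := by
  rcases h.lt_or_gt with h | h <;> simp [ltInd, h, h.not_gt]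

lemma ltInd_eq_one_add_swap {x y : α} (h : x ≠ y) : ltInd x y = 1 + ltInd y x := by
  rw [← ltInd_add_ltInd_swap h, add_assoc, CharTwo.add_self_eq_zero, add_zero]

lemma ite_mem_Ioo_min_max {p q x : α} (hp : x ≠ p) (hq : x ≠ q) :
    (if x ∈ Set.Ioo (min p q) (max p q) then 1 else 0 : ZMod 2) = ltInd p x + ltInd q x := by
  rcases hp.lt_or_gt with hp | hp <;> rcases hq.lt_or_gt with hq | hq <;>
    simp [ltInd, hp, hq, hp.not_gt, hq.not_gt, CharTwo.add_self_eq_zero]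

lemma ite_and_lt_add_ite_and_lt {a b c : α} (hab : a ≠ b) (hbc : b ≠ c) :
    (if a < b ∧ c < b then 1 else 0 : ZMod 2) + (if b < a ∧ b < c then 1 else 0)
      = ltInd a b + ltInd b c := by
  rcases hab.lt_or_gt with hab | hab <;> rcases hbc.lt_or_gt with hbc | hbc <;>
    simp [ltInd, hab, hbc, hab.not_gt, hbc.not_gt, CharTwo.add_self_eq_zero]

lemma ltInd_eq_of_not_between {a b y : α} (ha : y ≠ a) (hb : y ≠ b)
    (h : ¬ (min a b < y ∧ y < max a b)) : ltInd y a = ltInd y b ∧ ltInd a y = ltInd b y := by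
  rcases ha.lt_or_gt with ha | ha <;> rcases hb.lt_or_gt with hb | hb <;>
    simp_all [ltInd, ha.not_gt, hb.not_gt]

end LinearOrder

lemma ite_chordCross {p q p' q' : ℝ} [Decidable (chordCross p q p' q')]
    (hp : p' ≠ p) (hq : p' ≠ q) (hp' : q' ≠ p) (hq' : q' ≠ q) :
    (if chordCross p q p' q' then 1 else 0 : ZMod 2)
      = ltInd p p' + ltInd q p' + ltInd p q' + ltInd q q' := by
  have hxor : (if chordCross p q p' q' then 1 else 0 : ZMod 2) =
      (if p' ∈ Set.Ioo (min p q) (max p q) then 1 else 0) +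
      (if q' ∈ Set.Ioo (min p q) (max p q) then 1 else 0) := by
    by_cases h : p' ∈ Set.Ioo (min p q) (max p q) <;>
      by_cases h' : q' ∈ Set.Ioo (min p q) (max p q) <;>
      simp [chordCross, h, h', Xor', CharTwo.add_self_eq_zero]
  rw [hxor, ite_mem_Ioo_min_max hp hq, ite_mem_Ioo_min_max hp' hq']
  ring

lemma natCast_ncard_setOf {ι R : Type*} [Fintype ι] [AddCommMonoidWithOne R] (P : ι → Prop)
    [DecidablePred P] : (({x | P x} : Set ι).ncard : R) = ∑ x, if P x then 1 else 0 := by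
  rw [Set.ncard_eq_toFinset_card', Set.toFinset_ofPred, sum_boole]

section SumLt

variable {ι R : Type*} [Fintype ι] [LinearOrder ι] [AddCommMonoid R]

def sumLt (g : ι → ι → R) : R := ∑ j, ∑ k, if j < k then g j k else 0

lemma sumLt_congr {g h : ι → ι → R} (hgh : ∀ j k, j < k → g j k = h j k) :
    sumLt g = sumLt h :=
  sum_congr rfl fun j _ => sum_congr rfl fun k _ => by split_ifs with hjk <;> simp [hgh j k, *]

lemma sumLt_add (g h : ι → ι → R) :
    sumLt (fun j k => g j k + h j k) = sumLt g + sumLt h := by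
  simp only [sumLt, ← sum_add_distrib, ite_add_zero]

lemma sumLt_add_sumLt_swap_add_sum_diag (g : ι → ι → R) :
    sumLt g + sumLt (fun j k => g k j) + ∑ j, g j j = ∑ j, ∑ k, g j k := by
  rw [sumLt, sumLt, sum_comm (f := fun j k => if j < k then g k j else 0)]
  simp only [← sum_add_distrib]
  refine sum_congr rfl fun j _ => ?_
  rw [← Fintype.sum_ite_eq j (g j), ← sum_add_distrib]
  refine sum_congr rfl fun k _ => ?_
  rcases lt_trichotomy j k with h | rfl | h
  · simp [h, h.not_gt, h.ne]
  · simp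
  · simp [h, h.not_gt, h.ne']

end SumLt

lemma sumLt_fin_succ {R : Type*} [AddCommMonoid R] {n : ℕ}
    (g : Fin (n + 1) → Fin (n + 1) → R) :
    sumLt g = ∑ k : Fin n, g 0 k.succ + sumLt (fun j k : Fin n => g j.succ k.succ) := by
  simp [sumLt, Fin.sum_univ_succ, Fin.succ_pos]

lemma sumLt_fin_castSucc {R : Type*} [AddCommMonoid R] {n : ℕ}
    (g : Fin (n + 1) → Fin (n + 1) → R) :
    sumLt g = ∑ j : Fin n, g j.castSucc (Fin.last n)
      + sumLt (fun j k : Fin n => g j.castSucc k.castSucc) := by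
  simp [sumLt, Fin.sum_univ_castSucc, Fin.castSucc_lt_last, (Fin.castSucc_lt_last _).not_gt,
    sum_add_distrib, add_comm]

lemma sumLt_rotate {n : ℕ} {g : Fin (n + 1) → Fin (n + 1) → ZMod 2}
    (hg : ∀ a b, a ≠ b → g a b + g b a = 1) :
    sumLt (fun j k => g (j - 1) (k - 1)) = n + sumLt g := by
  have succ_sub_one (j : Fin n) : j.succ - 1 = j.castSucc := by
    simp [Fin.ext_iff, Fin.coe_sub_one]
  have zero_sub_one : (0 : Fin (n + 1)) - 1 = Fin.last n := by simp [Fin.ext_iff]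
  have flip (k : Fin n) : g (Fin.last n) k.castSucc = 1 + g k.castSucc (Fin.last n) := by
    rw [← hg _ _ (Fin.castSucc_lt_last k).ne, add_comm (g _ _), add_assoc,
      CharTwo.add_self_eq_zero, add_zero]
  -- `j ↦ j - 1` keeps the order of every pair `j < k` except the `n` pairs with `j = 0`.
  rw [sumLt_fin_succ, sumLt_fin_castSucc g]
  simp only [succ_sub_one, zero_sub_one, flip, sum_add_distrib]
  simp [add_assoc]

lemma sum_sum_ltInd_of_injective {ι α : Type*} [Fintype ι] [LinearOrder ι] [LinearOrder α]
    {x : ι → α} (hx : Function.Injective x) :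
    ∑ j, ∑ k, ltInd (x j) (x k) = sumLt (fun _ _ : ι => (1 : ZMod 2)) := by
  rw [← sumLt_add_sumLt_swap_add_sum_diag fun j k => ltInd (x j) (x k), ← sumLt_add]
  simp only [ltInd_self, sum_const_zero, add_zero]
  exact sumLt_congr fun j k hjk => ltInd_add_ltInd_swap (hx.ne hjk.ne)

namespace ChordCycle

variable {m : ℕ} {s t : Fin m → ℝ}

lemma s_ne_t (hinj : Function.Injective (fun p : Fin m × Bool => if p.2 then s p.1 else t p.1))
    (j k : Fin m) : s j ≠ t k := fun h => by
  simpa using @hinj (j, true) (k, false) (by simpa using h)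

lemma s_injective
    (hinj : Function.Injective (fun p : Fin m × Bool => if p.2 then s p.1 else t p.1)) :
    Function.Injective s := fun j k h => by
  simpa using @hinj (j, true) (k, true) (by simpa using h)

lemma t_injective
    (hinj : Function.Injective (fun p : Fin m × Bool => if p.2 then s p.1 else t p.1)) :
    Function.Injective t := fun j k h => by
  simpa using @hinj (j, false) (k, false) (by simpa using h)

variable [NeZero m]
  (hinj : Function.Injective (fun p : Fin m × Bool => if p.2 then s p.1 else t p.1))
  (hadj : ∀ k : Fin m, ∀ x ∈ Set.range s ∪ Set.range t,
    x ≠ t (k - 1) → x ≠ s k → ¬ (min (t (k - 1)) (s k) < x ∧ x < max (t (k - 1)) (s k)))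
include hinj hadj

lemma ltInd_s_s {j k : Fin m} (hjk : j ≠ k) :
    ltInd (s j) (s k) = ltInd (t (j - 1)) (t (k - 1)) := by
  have hs : s k ≠ s j := fun h => hjk ((s_injective hinj) h).symm
  have ht : t (j - 1) ≠ t (k - 1) := fun h => hjk (sub_left_injective ((t_injective hinj) h))
  rw [← (ltInd_eq_of_not_between (s_ne_t hinj k _) hs
      (hadj j _ (Or.inl ⟨k, rfl⟩) (s_ne_t hinj k _) hs)).2,
    (ltInd_eq_of_not_between ht (s_ne_t hinj k _).symm
      (hadj k _ (Or.inr ⟨_, rfl⟩) ht (s_ne_t hinj k _).symm)).1]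

lemma ltInd_t_s {j k : Fin m} (hjk : j ≠ k - 1) :
    ltInd (t j) (s k) = ltInd (t j) (t (k - 1)) := by
  have ht : t j ≠ t (k - 1) := fun h => hjk ((t_injective hinj) h)
  exact ((ltInd_eq_of_not_between ht (s_ne_t hinj k j).symm
      (hadj k _ (Or.inr ⟨j, rfl⟩) ht (s_ne_t hinj k j).symm)).1).symm

lemma sum_sum_ltInd_t_s :
    ∑ j, ∑ k, ltInd (t j) (s k)
      = ∑ k, ltInd (t (k - 1)) (s k) + ∑ j, ∑ k, ltInd (t j) (t k) := by
  have column (k : Fin m) : ∑ j, ltInd (t j) (s k)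
      = ltInd (t (k - 1)) (s k) + ∑ j, ltInd (t j) (t (k - 1)) := by
    rw [← add_sum_erase _ _ (mem_univ (k - 1)), ← add_sum_erase _ _ (mem_univ (k - 1)),
      ltInd_self, zero_add]
    exact congrArg _ (sum_congr rfl fun j hj => ltInd_t_s hinj hadj (ne_of_mem_erase hj))
  rw [sum_comm, sum_congr rfl fun k _ => column k, sum_add_distrib, sum_comm (γ := Fin m)]
  exact congrArg _ <|
    sum_congr rfl fun j _ => (Equiv.subRight 1).sum_comp fun k => ltInd (t j) (t k)

theorem sumLt_ite_chordCross [∀ j k : Fin m, Decidable (chordCross (s j) (t j) (s k) (t k))] :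
    sumLt (fun j k => if chordCross (s j) (t j) (s k) (t k) then (1 : ZMod 2) else 0)
      = 1 + ∑ k, (ltInd (t (k - 1)) (s k) + ltInd (s k) (t k)) := by
  obtain ⟨n, rfl⟩ := Nat.exists_eq_succ_of_ne_zero (NeZero.ne m)
  have hs := s_injective hinj
  have ht := t_injective hinj
  have hst := s_ne_t hinj
  have hcross : sumLt (fun j k => if chordCross (s j) (t j) (s k) (t k) then (1 : ZMod 2) else 0)
      = sumLt (fun j k => ltInd (s j) (s k)) + sumLt (fun j k => ltInd (t j) (s k))
        + sumLt (fun j k => ltInd (s j) (t k)) + sumLt (fun j k => ltInd (t j) (t k)) := by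
    rw [← sumLt_add, ← sumLt_add, ← sumLt_add]
    exact sumLt_congr fun j k hjk =>
      ite_chordCross (hs.ne hjk.ne') (hst k j) (hst j k).symm (ht.ne hjk.ne')
  have hss : sumLt (fun j k => ltInd (s j) (s k)) = n + sumLt (fun j k => ltInd (t j) (t k)) := by
    rw [sumLt_congr fun j k hjk => ltInd_s_s hinj hadj hjk.ne]
    exact sumLt_rotate fun a b hab => ltInd_add_ltInd_swap (ht.ne hab)
  have hst' : sumLt (fun j k => ltInd (s j) (t k))
      = sumLt (fun _ _ : Fin (n + 1) => 1) + sumLt (fun j k => ltInd (t k) (s j)) := by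
    rw [← sumLt_add]
    exact sumLt_congr fun j k _ => ltInd_eq_one_add_swap (hst j k)
  have hdiag : ∑ k, ltInd (t k) (s k) = (n + 1 : ℕ) + ∑ k, ltInd (s k) (t k) := by
    simp [ltInd_eq_one_add_swap (hst _ _).symm, sum_add_distrib]
  have hswap := sumLt_add_sumLt_swap_add_sum_diag fun j k => ltInd (t j) (s k)
  rw [sum_sum_ltInd_t_s hinj hadj, sum_sum_ltInd_of_injective ht] at hswap
  rw [hcross, hss, hst', sum_add_distrib]
  linear_combination (norm := skip) hswap + hdiag
  push_cast
  ring_nf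
  reduce_mod_char

end ChordCycle

/-- Chord `k` joins `s k`, the perturbed copy of `a k`, to `t k`, that of `a (k + 1)`; `hadj`
says that the two ends `t (k - 1)` and `s k` at `a k` are neighbours among all endpoints. -/
theorem stmt_14_general (m : ℕ) [NeZero m] (s t : Fin m → ℝ)
    (hinj : Function.Injective
      (fun p : Fin m × Bool => if p.2 then s p.1 else t p.1))
    (hadj : ∀ k : Fin m, ∀ x ∈ Set.range s ∪ Set.range t,
      x ≠ t (k - 1) → x ≠ s k →
        ¬ (min (t (k - 1)) (s k) < x ∧ x < max (t (k - 1)) (s k))) :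
    {p : Fin m × Fin m | p.1 < p.2 ∧
        chordCross (s p.1) (t p.1) (s p.2) (t p.2)}.ncard ≡
      1 + {k : Fin m | t (k - 1) < s k ∧ t k < s k}.ncard
        + {k : Fin m | s k < t (k - 1) ∧ s k < t k}.ncard [MOD 2] := by
  classical
  rw [← ZMod.natCast_eq_natCast_iff]
  push_cast
  rw [natCast_ncard_setOf, natCast_ncard_setOf, natCast_ncard_setOf, add_assoc,
    ← sum_add_distrib, Fintype.sum_prod_type]
  simp only [ite_and]
  refine (ChordCycle.sumLt_ite_chordCross hinj hadj).trans
    (congrArg _ (sum_congr rfl fun k _ => ?_))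
  simpa only [ite_and] using (ite_and_lt_add_ite_and_lt (ChordCycle.s_ne_t hinj k _).symm
    (ChordCycle.s_ne_t hinj k k)).symm

/-- A cycle of `m` chords in the upper half-plane: chord `k` has endpoints `s k` (near the
point `a k`) and `t k` (near `a (k+1)`), all `2m` endpoints distinct, with `t (k-1)` and
`s k` adjacent among all endpoints (they are the two perturbed ends at `a k`), and the
overall leftmost endpoint being `s 0`.  Then the number of crossings among the chords is
congruent mod 2 to `1` plus the number of descending right-turns (`t (k-1) < s k` and
`t k < s k`) plus the number of ascending left-turns (`s k < t (k-1)` and `s k < t k`). -/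
theorem stmt_14 (m : ℕ) [NeZero m] (hm : 2 ≤ m) (s t : Fin m → ℝ)
    (hinj : Function.Injective
      (fun p : Fin m × Bool => if p.2 then s p.1 else t p.1))
    (hadj : ∀ k : Fin m, ∀ x ∈ Set.range s ∪ Set.range t,
      x ≠ t (k - 1) → x ≠ s k →
        ¬ (min (t (k - 1)) (s k) < x ∧ x < max (t (k - 1)) (s k)))
    (hmin : ∀ x ∈ Set.range s ∪ Set.range t, s 0 ≤ x) :
    {p : Fin m × Fin m | p.1 < p.2 ∧
        chordCross (s p.1) (t p.1) (s p.2) (t p.2)}.ncard ≡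
      1 + {k : Fin m | t (k - 1) < s k ∧ t k < s k}.ncard
        + {k : Fin m | s k < t (k - 1) ∧ s k < t k}.ncard [MOD 2] :=
  stmt_14_general m s t hinj hadj
end
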